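/- arXiv:2601.21170 — 5 statements merged into one kernel-verified Lean document; each statement's English description precedes it below -/
import Mathlib

section
/- Let C be an N×N real symmetric positive definite matrix and {1,…,N} = S ⊔ S′ a partition with both blocks nonempty, so that C_S and C_{S′} are positive definite. Define θ := ‖C_{SS′}‖² / (λ_min(C_S) λ_min(C_{S′})) and, for λ > 0, the resolvent difference R_S(λ) := (C_S + λI)^{−1} − [(C + λI)^{−1}]_S. If θ < 1, then for every λ > 0, ‖R_S(λ)‖ ≤ ‖C_{SS′}‖² / ( (1 − θ)(λ_min(C) + λ)³ ). -/
open Matrix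

noncomputable section

/-- Spectral (operator `2`-) norm of a matrix over `𝕜 = ℝ` or `ℂ`. -/
noncomputable def specNorm {𝕜 : Type*} [RCLike 𝕜] {m n : Type*} [Fintype m] [Fintype n]
    [DecidableEq n] (M : Matrix m n 𝕜) : ℝ :=
  ‖LinearMap.toContinuousLinearMap (Matrix.toEuclideanLin M)‖

/-- Real power of a real symmetric (positive definite) matrix, defined by the spectral
theorem (functional calculus applied to `fun x => x ^ t`); junk value `0` if not symmetric. -/
noncomputable def mrpow {n : Type*} [Fintype n] [DecidableEq n]
    (X : Matrix n n ℝ) (t : ℝ) : Matrix n n ℝ :=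
  if hX : X.IsHermitian then
    (hX.eigenvectorUnitary : Matrix n n ℝ) *
      Matrix.diagonal (fun i => hX.eigenvalues i ^ t) *
      (star (hX.eigenvectorUnitary : Matrix n n ℝ))
  else 0

/-- Spectral radius of a real symmetric matrix (junk value `0` otherwise). -/
noncomputable def specRad {n : Type*} [Fintype n] [DecidableEq n]
    (A : Matrix n n ℝ) : ℝ :=
  if hA : A.IsHermitian then ⨆ i, |hA.eigenvalues i| else 0

/-- Smallest eigenvalue of a real symmetric matrix (junk value `0` otherwise). -/
noncomputable def lamMin {n : Type*} [Fintype n] [DecidableEq n]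
    (A : Matrix n n ℝ) : ℝ :=
  if hA : A.IsHermitian then ⨅ i, hA.eigenvalues i else 0

/-- The submatrix of `M` with rows indexed by `S` and columns indexed by `T`. -/
def subMat {α : Type*} {N : ℕ} (M : Matrix (Fin N) (Fin N) α) (S T : Finset (Fin N)) :
    Matrix {i // i ∈ S} {j // j ∈ T} α :=
  M.submatrix Subtype.val Subtype.val

/-- Off-diagonal oscillation: the gap between the greatest and the smallest
off-diagonal entries. -/
noncomputable def Osc {n : Type*} (M : Matrix n n ℝ) : ℝ :=
  sSup {x | ∃ i j, i ≠ j ∧ M i j = x} - sInf {x | ∃ i j, i ≠ j ∧ M i j = x}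

end


open Function
open scoped Matrix.Norms.L2Operator InnerProductSpace RealInnerProductSpace

namespace Stmt2Aux

lemma specNorm_eq_norm {m n : Type*} [Fintype m] [Fintype n] [DecidableEq n]
    (M : Matrix m n ℝ) : specNorm M = ‖M‖ := rfl

lemma subMat_smul_one {N : ℕ} (c : ℝ) (T : Finset (Fin N)) :
    subMat (c • (1 : Matrix (Fin N) (Fin N) ℝ)) T T = c • (1 : Matrix _ _ ℝ) := by
  ext i j
  simp only [subMat, Matrix.submatrix_apply, Matrix.smul_apply, Matrix.one_apply, smul_eq_mul]
  by_cases h : i = j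
  · simp [h]
  · have h' : (i : Fin N) ≠ (j : Fin N) := fun hh => h (Subtype.ext hh)
    simp [h, h']

variable {n : Type*} [Fintype n] [DecidableEq n]

omit [DecidableEq n] in
lemma inner_eq_dot (x y : EuclideanSpace ℝ n) :
    ⟪x, y⟫_ℝ = dotProduct (WithLp.equiv 2 (n → ℝ) x) (WithLp.equiv 2 (n → ℝ) y) := by
  simp [PiLp.inner_apply, dotProduct, RCLike.inner_apply, mul_comm]

lemma mulVec_norm_lower {X : Matrix n n ℝ} {c : ℝ}
    (hX : (X - c • 1).PosSemidef) (v : EuclideanSpace ℝ n) :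
    c * ‖v‖ ≤ ‖(EuclideanSpace.equiv n ℝ).symm (X *ᵥ WithLp.equiv 2 (n → ℝ) v)‖ := by
  classical
  set v' : n → ℝ := WithLp.equiv 2 (n → ℝ) v with hv'
  have hq := hX.dotProduct_mulVec_nonneg v'
  have hstar : star v' = v' := by funext i; simp
  rw [sub_mulVec, smul_mulVec, one_mulVec, dotProduct_sub, hstar, dotProduct_smul,
    sub_nonneg, smul_eq_mul] at hq
  have h1 : v' ⬝ᵥ (X *ᵥ v') = ⟪v, (EuclideanSpace.equiv n ℝ).symm (X *ᵥ v')⟫_ℝ := by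
    rw [inner_eq_dot]; rfl
  have h2 : v' ⬝ᵥ v' = ‖v‖ ^ 2 := by
    rw [← real_inner_self_eq_norm_sq, inner_eq_dot]
  rw [h1, h2] at hq
  have hcs := real_inner_le_norm v ((EuclideanSpace.equiv n ℝ).symm (X *ᵥ v'))
  have hq2 : c * ‖v‖ ^ 2 ≤ ‖v‖ * ‖(EuclideanSpace.equiv n ℝ).symm (X *ᵥ v')‖ := le_trans hq hcs
  rcases eq_or_lt_of_le (norm_nonneg v) with h0 | h0
  · simp [← h0]
  · have : c * ‖v‖ * ‖v‖ ≤ ‖(EuclideanSpace.equiv n ℝ).symm (X *ᵥ v')‖ * ‖v‖ := by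
      nlinarith
    exact le_of_mul_le_mul_right this h0

lemma inv_norm_le {X : Matrix n n ℝ} {c : ℝ} (hc : 0 < c)
    (hX : (X - c • 1).PosSemidef) (hdet : IsUnit X.det) :
    ‖X⁻¹‖ ≤ 1 / c := by
  rw [l2_opNorm_def]
  refine ContinuousLinearMap.opNorm_le_bound _ (by positivity) fun y => ?_
  set w : EuclideanSpace ℝ n := (EuclideanSpace.equiv n ℝ).symm (X⁻¹ *ᵥ WithLp.equiv 2 (n → ℝ) y)
  have happ : (LinearEquiv.trans toEuclideanLin LinearMap.toContinuousLinearMap X⁻¹) y = w := rfl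
  have hkey := mulVec_norm_lower hX w
  have hXw : X *ᵥ WithLp.equiv 2 (n → ℝ) w = WithLp.equiv 2 (n → ℝ) y := by
    show X *ᵥ (X⁻¹ *ᵥ _) = _
    rw [mulVec_mulVec, mul_nonsing_inv _ hdet, one_mulVec]
  rw [hXw] at hkey
  have hyy : (EuclideanSpace.equiv n ℝ).symm (WithLp.equiv 2 (n → ℝ) y) = y := rfl
  rw [hyy] at hkey
  rw [happ, div_mul_eq_mul_div, le_div_iff₀ hc, mul_comm ‖w‖ c]
  linarith

variable {m m' n' : Type*} [Fintype m] [Fintype m'] [Fintype n']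
  [DecidableEq m] [DecidableEq m'] [DecidableEq n']

lemma selection_norm (f : n' → n) (hf : Injective f) [Nonempty n'] :
    ‖(1 : Matrix n n ℝ).submatrix id f‖ = 1 := by
  set Q := (1 : Matrix n n ℝ).submatrix id f
  have hQ : Qᴴ * Q = 1 := by
    ext j j'
    simp only [Q, Matrix.mul_apply, Matrix.conjTranspose_apply, Matrix.submatrix_apply, id_eq,
      Matrix.one_apply, star_trivial]
    simp [ite_mul, one_mul, zero_mul, Finset.sum_ite_eq, hf.eq_iff, eq_comm]
  have h1 : ‖Q‖ * ‖Q‖ = 1 := by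
    rw [← l2_opNorm_conjTranspose_mul_self, hQ]
    rw [cstar_norm_def]
    simp
  rcases mul_self_eq_one_iff.mp h1 with h | h
  · exact h
  · nlinarith [norm_nonneg Q]

lemma norm_submatrix_le (M : Matrix m n ℝ) (e : m' → m) (f : n' → n)
    (he : Injective e) (hf : Injective f) :
    ‖M.submatrix e f‖ ≤ ‖M‖ := by
  rcases isEmpty_or_nonempty m' with hm | hm
  · have : M.submatrix e f = 0 := Subsingleton.elim _ _
    rw [this, norm_zero]; exact norm_nonneg M
  rcases isEmpty_or_nonempty n' with hn | hn
  · have : M.submatrix e f = 0 := Subsingleton.elim _ _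
    rw [this, norm_zero]; exact norm_nonneg M
  set P := (1 : Matrix m m ℝ).submatrix id e
  set Q := (1 : Matrix n n ℝ).submatrix id f
  have hfact : M.submatrix e f = Pᴴ * M * Q := by
    ext i j
    simp only [P, Q, Matrix.mul_apply, Matrix.conjTranspose_apply, Matrix.submatrix_apply, id_eq,
      Matrix.one_apply, star_trivial]
    simp [ite_mul, mul_ite, one_mul, zero_mul, mul_one, mul_zero,
      Finset.sum_ite_eq, Finset.sum_ite_eq']
  calc ‖M.submatrix e f‖ = ‖Pᴴ * M * Q‖ := by rw [hfact]
  _ ≤ ‖Pᴴ * M‖ * ‖Q‖ := l2_opNorm_mul _ _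
  _ ≤ ‖Pᴴ‖ * ‖M‖ * ‖Q‖ := by
      have := l2_opNorm_mul Pᴴ M
      have hQ0 : (0:ℝ) ≤ ‖Q‖ := norm_nonneg _
      nlinarith [norm_nonneg (Pᴴ * M)]
  _ = ‖M‖ := by
      rw [l2_opNorm_conjTranspose, selection_norm e he, selection_norm f hf, one_mul, mul_one]

lemma posSemidef_sub_smul_iff {X : Matrix n n ℝ} (hX : X.IsHermitian) (c : ℝ) :
    (X - c • 1).PosSemidef ↔ ∀ i, c ≤ hX.eigenvalues i := by
  constructor
  · intro hP i
    have hv := hX.mulVec_eigenvectorBasis i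
    set v : n → ℝ := WithLp.equiv 2 (n → ℝ) (hX.eigenvectorBasis i) with hvdef
    have h0 := hP.dotProduct_mulVec_nonneg v
    have hXv : (X - c • 1) *ᵥ v = (hX.eigenvalues i - c) • v := by
      rw [sub_mulVec, smul_mulVec, one_mulVec]
      rw [show X *ᵥ v = hX.eigenvalues i • v from hv, sub_smul]
    rw [hXv, dotProduct_smul, star_trivial, smul_eq_mul] at h0
    have hvv : v ⬝ᵥ v = 1 := by
      have hnorm : ‖hX.eigenvectorBasis i‖ = 1 := hX.eigenvectorBasis.orthonormal.1 i
      have := real_inner_self_eq_norm_sq (hX.eigenvectorBasis i)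
      rw [inner_eq_dot, hnorm] at this
      simpa [hvdef] using this
    rw [hvv, mul_one, sub_nonneg] at h0
    exact h0
  · intro h
    have hU := (Matrix.mem_unitaryGroup_iff).mp hX.eigenvectorUnitary.2
    have key : X - c • 1 =
        (hX.eigenvectorUnitary : Matrix n n ℝ) * diagonal (fun i => hX.eigenvalues i - c) *
          (hX.eigenvectorUnitary : Matrix n n ℝ)ᴴ := by
      have hdiag : diagonal (fun i => hX.eigenvalues i - c) =
          diagonal (RCLike.ofReal ∘ hX.eigenvalues) - c • 1 := by
        rw [smul_one_eq_diagonal, ← diagonal_sub]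
        rfl
      have h2 : (hX.eigenvectorUnitary : Matrix n n ℝ) * diagonal (RCLike.ofReal ∘ hX.eigenvalues) *
          (hX.eigenvectorUnitary : Matrix n n ℝ)ᴴ = X := by
        rw [← star_eq_conjTranspose]; exact hX.spectral_theorem.symm
      rw [hdiag, mul_sub, sub_mul, h2, mul_smul_comm, smul_mul_assoc, mul_one,
        ← star_eq_conjTranspose, hU]
    rw [key]
    exact (PosSemidef.diagonal (fun i => sub_nonneg.2 (h i))).mul_mul_conjTranspose_same _

lemma lamMin_eq {X : Matrix n n ℝ} (hX : X.IsHermitian) :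
    lamMin X = ⨅ i, hX.eigenvalues i := dif_pos hX

lemma lamMin_le [Nonempty n] {X : Matrix n n ℝ} (hX : X.IsHermitian) (i : n) :
    lamMin X ≤ hX.eigenvalues i := by
  rw [lamMin_eq hX]
  exact ciInf_le (Set.Finite.bddBelow (Set.finite_range _)) i

lemma le_lamMin [Nonempty n] {X : Matrix n n ℝ} (hX : X.IsHermitian) {c : ℝ}
    (h : ∀ i, c ≤ hX.eigenvalues i) : c ≤ lamMin X := by
  rw [lamMin_eq hX]; exact le_ciInf h

lemma lamMin_pos [Nonempty n] {X : Matrix n n ℝ} (hX : X.PosDef) : 0 < lamMin X := by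
  obtain ⟨i0, hi0⟩ := Finite.exists_min hX.1.eigenvalues
  exact lt_of_lt_of_le (hX.eigenvalues_pos i0) (le_lamMin hX.1 hi0)

lemma lamMin_nonneg [Nonempty n] {X : Matrix n n ℝ} (hX : X.PosSemidef) : 0 ≤ lamMin X :=
  le_lamMin hX.1 hX.eigenvalues_nonneg

lemma posSemidef_sub_lamMin [Nonempty n] {X : Matrix n n ℝ} (hX : X.IsHermitian) :
    (X - lamMin X • 1).PosSemidef :=
  (posSemidef_sub_smul_iff hX _).2 (lamMin_le hX)

end Stmt2Aux

open Stmt2Aux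

set_option maxHeartbeats 1000000 in
/-- resolvent-difference bound under partial observability. -/
theorem statement2 {N : ℕ}
    (C : Matrix (Fin N) (Fin N) ℝ) (hC : C.PosDef)
    (S : Finset (Fin N)) (hS : S.Nonempty) (hS' : Sᶜ.Nonempty)
    (θ : ℝ)
    (hθdef : θ = specNorm (subMat C S Sᶜ) ^ 2 /
      (lamMin (subMat C S S) * lamMin (subMat C Sᶜ Sᶜ)))
    (hθ : θ < 1) :
    ∀ lam : ℝ, 0 < lam →
      specNorm ((subMat C S S + lam • 1)⁻¹ - subMat ((C + lam • 1)⁻¹) S S) ≤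
        specNorm (subMat C S Sᶜ) ^ 2 / ((1 - θ) * (lamMin C + lam) ^ 3) := by
  intro lam hlam
  classical
  have hSn : Nonempty {i // i ∈ S} := ⟨⟨hS.choose, hS.choose_spec⟩⟩
  have hScn : Nonempty {i // i ∈ Sᶜ} := ⟨⟨hS'.choose, hS'.choose_spec⟩⟩
  have hNn : Nonempty (Fin N) := ⟨hS.choose⟩
  set μ : ℝ := lamMin C + lam with hμdef
  have hμ : 0 < μ := add_pos (lamMin_pos hC) hlam
  -- basic posdef facts
  have hsm_psd : ((lam : ℝ) • (1 : Matrix (Fin N) (Fin N) ℝ)).PosSemidef := by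
    rw [smul_one_eq_diagonal]
    exact PosSemidef.diagonal (fun _ => hlam.le)
  set K : Matrix (Fin N) (Fin N) ℝ := C + lam • 1 with hKdef
  have hK : K.PosDef := hC.add_posSemidef hsm_psd
  have hKdet : IsUnit K.det := hK.det_pos.ne'.isUnit
  set A : Matrix _ _ ℝ := subMat C S S + lam • 1 with hAdef
  set B : Matrix _ _ ℝ := subMat C Sᶜ Sᶜ + lam • 1 with hBdef
  set E : Matrix _ _ ℝ := subMat C S Sᶜ with hEdef
  set E' : Matrix _ _ ℝ := subMat C Sᶜ S with hE'def
  -- posSemidef shifts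
  have hCsub : (C - lamMin C • 1).PosSemidef := posSemidef_sub_lamMin hC.1
  have hKsub : (K - μ • 1).PosSemidef := by
    have h : K - μ • 1 = C - lamMin C • 1 := by
      rw [hKdef, hμdef, add_smul]; abel
    rw [h]; exact hCsub
  have hAsub : (A - μ • 1).PosSemidef := by
    have h : A - μ • 1 = subMat (C - lamMin C • 1) S S := by
      have h1 : subMat (C - lamMin C • 1) S S
          = subMat C S S - subMat (lamMin C • 1) S S := rfl
      rw [h1, subMat_smul_one, hAdef, hμdef, add_smul]
      abel
    rw [h]; exact hCsub.submatrix _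
  have hBsub : (B - μ • 1).PosSemidef := by
    have h : B - μ • 1 = subMat (C - lamMin C • 1) Sᶜ Sᶜ := by
      have h1 : subMat (C - lamMin C • 1) Sᶜ Sᶜ
          = subMat C Sᶜ Sᶜ - subMat (lamMin C • 1) Sᶜ Sᶜ := rfl
      rw [h1, subMat_smul_one, hBdef, hμdef, add_smul]
      abel
    rw [h]; exact hCsub.submatrix _
  have hμsm : ∀ {p : Type} [Fintype p] [DecidableEq p],
      (μ • (1 : Matrix p p ℝ)).PosDef := by
    intro p _ _
    rw [smul_one_eq_diagonal]
    exact PosDef.diagonal (fun _ => hμ)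
  have hA : A.PosDef := by
    rw [show A = (A - μ • 1) + μ • 1 by abel]
    exact Matrix.PosDef.posSemidef_add hAsub hμsm
  have hB : B.PosDef := by
    rw [show B = (B - μ • 1) + μ • 1 by abel]
    exact Matrix.PosDef.posSemidef_add hBsub hμsm
  have hAdet : IsUnit A.det := hA.det_pos.ne'.isUnit
  have hBdet : IsUnit B.det := hB.det_pos.ne'.isUnit
  -- norm bounds on inverses
  have hAinv : ‖A⁻¹‖ ≤ 1 / μ := inv_norm_le hμ hAsub hAdet
  have hBinv : ‖B⁻¹‖ ≤ 1 / μ := inv_norm_le hμ hBsub hBdet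
  have hKinv : ‖K⁻¹‖ ≤ 1 / μ := inv_norm_le hμ hKsub hKdet
  set P : Matrix (Fin N) (Fin N) ℝ := K⁻¹ with hPdef
  set P11 : Matrix _ _ ℝ := subMat P S S with hP11def
  set P21 : Matrix _ _ ℝ := subMat P Sᶜ S with hP21def
  -- block structure
  let e : {i // i ∈ S} ⊕ {i // i ∈ Sᶜ} ≃ Fin N :=
    (Equiv.sumCongr (Equiv.refl _) (Equiv.subtypeEquivRight (fun i => Finset.mem_compl))).trans
      (Equiv.sumCompl (· ∈ S))
  have heq : ∀ M : Matrix (Fin N) (Fin N) ℝ, M.submatrix ⇑e ⇑e =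
      fromBlocks (subMat M S S) (subMat M S Sᶜ) (subMat M Sᶜ S) (subMat M Sᶜ Sᶜ) := by
    intro M; ext i j; cases i <;> cases j <;> rfl
  have hKSS : subMat K S S = A := by
    have h1 : subMat K S S = subMat C S S + subMat (lam • 1) S S := by rw [hKdef]; rfl
    rw [h1, subMat_smul_one, hAdef]
  have hKcc : subMat K Sᶜ Sᶜ = B := by
    have h1 : subMat K Sᶜ Sᶜ = subMat C Sᶜ Sᶜ + subMat (lam • 1) Sᶜ Sᶜ := by rw [hKdef]; rfl
    rw [h1, subMat_smul_one, hBdef]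
  have hoffSSc : ∀ (i : {i // i ∈ S}) (j : {j // j ∈ Sᶜ}), (i : Fin N) ≠ (j : Fin N) := by
    rintro ⟨i, hi⟩ ⟨j, hj⟩ h
    change i = j at h
    exact (Finset.mem_compl.mp hj) (h ▸ hi)
  have hKSc : subMat K S Sᶜ = E := by
    have h1 : subMat K S Sᶜ = subMat C S Sᶜ + subMat (lam • 1) S Sᶜ := by rw [hKdef]; rfl
    have h2 : subMat ((lam : ℝ) • (1 : Matrix (Fin N) (Fin N) ℝ)) S Sᶜ = 0 := by
      ext i j
      simp [subMat, Matrix.submatrix_apply, Matrix.smul_apply, Matrix.one_apply, hoffSSc i j]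
    rw [h1, h2, add_zero, hEdef]
  have hKcS : subMat K Sᶜ S = E' := by
    have h1 : subMat K Sᶜ S = subMat C Sᶜ S + subMat (lam • 1) Sᶜ S := by rw [hKdef]; rfl
    have h2 : subMat ((lam : ℝ) • (1 : Matrix (Fin N) (Fin N) ℝ)) Sᶜ S = 0 := by
      ext i j
      simp [subMat, Matrix.submatrix_apply, Matrix.smul_apply, Matrix.one_apply,
        (Ne.symm (hoffSSc j i))]
    rw [h1, h2, add_zero, hE'def]
  have hbig : fromBlocks A E E' B *
      fromBlocks P11 (subMat P S Sᶜ) P21 (subMat P Sᶜ Sᶜ) = 1 := by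
    rw [hP11def, hP21def, ← hKSS, ← hKSc, ← hKcS, ← hKcc, ← heq K, ← heq P,
      submatrix_mul_equiv K P ⇑e e ⇑e, hPdef, mul_nonsing_inv _ hKdet, submatrix_one_equiv]
  rw [fromBlocks_multiply, ← fromBlocks_one] at hbig
  have h11 : A * P11 + E * P21 = 1 := by
    ext i j
    have := congrFun (congrFun hbig (Sum.inl i)) (Sum.inl j)
    simpa [Matrix.fromBlocks] using this
  have h21 : E' * P11 + B * P21 = 0 := by
    ext i j
    have := congrFun (congrFun hbig (Sum.inr i)) (Sum.inl j)
    simpa [Matrix.fromBlocks] using this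
  -- solve for P21 and the resolvent difference
  have hP21eq : P21 = -(B⁻¹ * (E' * P11)) := by
    have hBP : B * P21 = -(E' * P11) := by
      rw [eq_neg_iff_add_eq_zero, add_comm]
      exact h21
    calc P21 = B⁻¹ * (B * P21) := by
          rw [← Matrix.mul_assoc, nonsing_inv_mul _ hBdet, Matrix.one_mul]
    _ = -(B⁻¹ * (E' * P11)) := by rw [hBP, Matrix.mul_neg]
  have hR : A⁻¹ - P11 = A⁻¹ * (E * P21) := by
    have h := congrArg (fun M => A⁻¹ * M) h11
    simp only [Matrix.mul_add, Matrix.mul_one] at h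
    rw [← Matrix.mul_assoc, nonsing_inv_mul _ hAdet, Matrix.one_mul] at h
    conv_lhs => rw [← h]
    abel
  -- norm estimates
  have hP11n : ‖P11‖ ≤ 1 / μ := by
    refine le_trans ?_ hKinv
    exact norm_submatrix_le P Subtype.val Subtype.val Subtype.val_injective Subtype.val_injective
  have hE'n : ‖E'‖ = ‖E‖ := by
    have hsymm : E' = Eᴴ := by
      rw [hE'def, hEdef]
      ext i j
      show C (i : Fin N) (j : Fin N) = star (C (j : Fin N) (i : Fin N))
      rw [star_trivial]
      conv_lhs => rw [← hC.1]
      rfl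
    rw [hsymm, l2_opNorm_conjTranspose]
  have hP21n : ‖P21‖ ≤ (1 / μ) * (‖E‖ * (1 / μ)) := by
    calc ‖P21‖ = ‖B⁻¹ * (E' * P11)‖ := by rw [hP21eq, norm_neg]
    _ ≤ ‖B⁻¹‖ * ‖E' * P11‖ := l2_opNorm_mul _ _
    _ ≤ (1 / μ) * (‖E'‖ * ‖P11‖) := by
        refine mul_le_mul hBinv (l2_opNorm_mul _ _) (norm_nonneg _) (by positivity)
    _ ≤ (1 / μ) * (‖E‖ * (1 / μ)) := by
        rw [hE'n]
        have h1 : (0:ℝ) ≤ 1 / μ := by positivity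
        have h2 : (0:ℝ) ≤ ‖E‖ := norm_nonneg _
        exact mul_le_mul_of_nonneg_left (mul_le_mul_of_nonneg_left hP11n h2) h1
  have hRn : ‖A⁻¹ - P11‖ ≤ (1 / μ) * (‖E‖ * ((1 / μ) * (‖E‖ * (1 / μ)))) := by
    calc ‖A⁻¹ - P11‖ = ‖A⁻¹ * (E * P21)‖ := by rw [hR]
    _ ≤ ‖A⁻¹‖ * ‖E * P21‖ := l2_opNorm_mul _ _
    _ ≤ (1 / μ) * (‖E‖ * ‖P21‖) := by
        refine mul_le_mul hAinv (l2_opNorm_mul _ _) (norm_nonneg _) (by positivity)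
    _ ≤ (1 / μ) * (‖E‖ * ((1 / μ) * (‖E‖ * (1 / μ)))) := by
        have h1 : (0:ℝ) ≤ 1 / μ := by positivity
        have h2 : (0:ℝ) ≤ ‖E‖ := norm_nonneg _
        exact mul_le_mul_of_nonneg_left (mul_le_mul_of_nonneg_left hP21n h2) h1
  -- θ is nonnegative
  have hθ0 : 0 ≤ θ := by
    rw [hθdef]
    refine div_nonneg (sq_nonneg _) (mul_nonneg ?_ ?_)
    · exact lamMin_nonneg (hC.posSemidef.submatrix Subtype.val)
    · exact lamMin_nonneg (hC.posSemidef.submatrix Subtype.val)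
  have h1θ : 0 < 1 - θ := by linarith
  -- final assembly
  rw [specNorm_eq_norm, specNorm_eq_norm]
  refine le_trans hRn ?_
  have hμ3 : (0:ℝ) < μ ^ 3 := by positivity
  have hden : (0:ℝ) < (1 - θ) * μ ^ 3 := mul_pos h1θ hμ3
  have hLHS : (1 / μ) * (‖E‖ * ((1 / μ) * (‖E‖ * (1 / μ)))) = ‖E‖ ^ 2 / μ ^ 3 := by
    field_simp
  rw [hLHS, div_le_div_iff₀ hμ3 hden]
  nlinarith [mul_nonneg (mul_nonneg (sq_nonneg ‖E‖) hμ3.le) hθ0]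
end

section
/- Let Ā be an N×N real symmetric matrix with spectral radius ρ(Ā) < 1, let σ > 0 and α > 0, set C := σ²(I − Ā)^{−α}, and let {1,…,N} = S ⊔ S′ be a partition with both blocks nonempty. Then the cross-block of the covariance satisfies ‖C_{SS′}‖ ≤ σ² α (1 − ρ(Ā))^{−α−1} ‖Ā_{SS′}‖. -/
open Matrix

/-
Let `D` be the pinching of `A`: it keeps the diagonal blocks `S × S` and `Sᶜ × Sᶜ` and zeroes the
rest. Every power of `D`, hence `(1 - D)^(-α)`, is block diagonal, so `C_{SSᶜ}` is the cross block
of `σ² ((1 - A)^(-α) - (1 - D)^(-α))`. Both powers are sums of the negative binomial series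
`(1 - X)^(-α) = ∑ₖ multichoose(α, k) Xᵏ`. With `ρ = ρ(A) ≥ ‖A‖ ≥ ‖D‖`, the telescoping bound
`‖Aᵏ⁺¹ - Dᵏ⁺¹‖ ≤ (k + 1) ρᵏ ‖A - D‖` sums to `α (1 - ρ)^(-α-1) ‖A - D‖`, the derivative of the
scalar series at `ρ`. Finally `A - D` consists of the off-diagonal blocks `A_{SSᶜ}` and its
transpose, so its norm is at most `‖A_{SSᶜ}‖`.
-/

open Polynomial
open scoped Nat Matrix.Norms.L2Operator

section Multichoose

variable {K : Type*} [Field K] [CharZero K]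

lemma Ring.multichoose_eq_eval_ascPochhammer_div (a : K) (n : ℕ) :
    Ring.multichoose a n = (ascPochhammer K n).eval a / n ! := by
  rw [eq_div_iff (Nat.cast_ne_zero.mpr n.factorial_ne_zero), mul_comm, ← nsmul_eq_mul,
    Ring.factorial_nsmul_multichoose_eq_ascPochhammer, ascPochhammer_smeval_eq_eval]

lemma Ring.succ_mul_multichoose_succ (a : K) (n : ℕ) :
    (n + 1) * Ring.multichoose a (n + 1) = a * Ring.multichoose (a + 1) n := by
  simp only [Ring.multichoose_eq_eval_ascPochhammer_div, ascPochhammer_succ_left, eval_mul,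
    eval_X, eval_comp, eval_add, eval_one, Nat.factorial_succ, Nat.cast_mul]
  field_simp
  push_cast
  ring

end Multichoose

lemma Ring.multichoose_pos {K : Type*} [Field K] [LinearOrder K] [IsStrictOrderedRing K] {a : K}
    (ha : 0 < a) (n : ℕ) : 0 < Ring.multichoose a n := by
  rw [Ring.multichoose_eq_eval_ascPochhammer_div]
  exact div_pos (ascPochhammer_pos n a ha) (by positivity)

lemma hasSum_multichoose_mul_pow (a : ℝ) {x : ℝ} (hx : |x| < 1) :
    HasSum (fun n : ℕ => Ring.multichoose a n * x ^ n) ((1 - x) ^ (-a)) := by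
  have h := (Real.one_div_one_sub_rpow_hasFPowerSeriesOnBall_zero a).hasSum
    (y := x) (by simpa [enorm_eq_nnnorm, ← NNReal.coe_lt_coe] using hx)
  simp only [FormalMultilinearSeries.ofScalars_apply_eq, zero_add, smul_eq_mul,
    ← Ring.multichoose_eq] at h
  rwa [Real.rpow_neg (by linarith [(abs_lt.mp hx).2]), ← one_div]

lemma hasSum_succ_mul_multichoose_succ_mul_pow (a : ℝ) {x : ℝ} (hx : |x| < 1) :
    HasSum (fun k : ℕ => (k + 1) * Ring.multichoose a (k + 1) * x ^ k)
      (a * (1 - x) ^ (-a - 1)) := by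
  simp only [Ring.succ_mul_multichoose_succ, mul_assoc]
  rw [show -a - 1 = -(a + 1) by ring]
  exact (hasSum_multichoose_mul_pow (a + 1) hx).mul_left a

lemma norm_pow_succ_sub_pow_succ_le {R : Type*} [SeminormedRing R] {a b : R} {r : ℝ}
    (ha : ‖a‖ ≤ r) (hb : ‖b‖ ≤ r) (k : ℕ) :
    ‖a ^ (k + 1) - b ^ (k + 1)‖ ≤ (k + 1) * r ^ k * ‖a - b‖ := by
  induction k with
  | zero => simp
  | succ k ih =>
    have hr : 0 ≤ r := (norm_nonneg a).trans ha
    have hbk : ‖b ^ (k + 1)‖ ≤ r ^ (k + 1) :=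
      (norm_pow_le' b k.succ_pos).trans (pow_le_pow_left₀ (norm_nonneg b) hb _)
    calc ‖a ^ (k + 1 + 1) - b ^ (k + 1 + 1)‖
        = ‖a * (a ^ (k + 1) - b ^ (k + 1)) + (a - b) * b ^ (k + 1)‖ := by
          rw [mul_sub, sub_mul, ← pow_succ', ← pow_succ', sub_add_sub_cancel]
      _ ≤ ‖a‖ * ‖a ^ (k + 1) - b ^ (k + 1)‖ + ‖a - b‖ * ‖b ^ (k + 1)‖ :=
          (norm_add_le _ _).trans (add_le_add (norm_mul_le _ _) (norm_mul_le _ _))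
      _ ≤ r * ((k + 1) * r ^ k * ‖a - b‖) + ‖a - b‖ * r ^ (k + 1) := by gcongr
      _ = (↑(k + 1) + 1) * r ^ (k + 1) * ‖a - b‖ := by push_cast; ring

lemma norm_sub_le_of_hasSum_smul_pow {R : Type*} [SeminormedRing R] [NormedSpace ℝ R]
    {c : ℕ → ℝ} (hc : ∀ k, 0 ≤ c k) {a b x y : R} {r s : ℝ} (ha : ‖a‖ ≤ r) (hb : ‖b‖ ≤ r)
    (hx : HasSum (fun k => c k • a ^ k) x) (hy : HasSum (fun k => c k • b ^ k) y)
    (hs : HasSum (fun k => (k + 1) * c (k + 1) * r ^ k) s) :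
    ‖x - y‖ ≤ s * ‖a - b‖ := by
  have hxy : HasSum (fun k => c (k + 1) • (a ^ (k + 1) - b ^ (k + 1))) (x - y) := by
    have h := (hasSum_nat_add_iff' (f := fun k => c k • (a ^ k - b ^ k)) 1).mpr
      (by simpa only [smul_sub] using hx.sub hy)
    simpa using h
  refine hxy.norm_le_of_bounded (hs.mul_right ‖a - b‖) fun k => ?_
  calc ‖c (k + 1) • (a ^ (k + 1) - b ^ (k + 1))‖
      ≤ c (k + 1) * ((k + 1) * r ^ k * ‖a - b‖) := by
        rw [norm_smul, Real.norm_of_nonneg (hc _)]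
        exact mul_le_mul_of_nonneg_left (norm_pow_succ_sub_pow_succ_le ha hb k) (hc _)
    _ = (k + 1) * c (k + 1) * r ^ k * ‖a - b‖ := by ring

namespace Matrix

variable {𝕜 : Type*} [RCLike 𝕜]

section Submatrix

variable {l m n o : Type*} [Fintype l] [Fintype m] [Fintype n] [Fintype o]

lemma l2_opNorm_one_le [DecidableEq n] : ‖(1 : Matrix n n 𝕜)‖ ≤ 1 := by
  rw [← diagonal_one, l2_opNorm_diagonal]
  exact (pi_norm_le_iff_of_nonneg zero_le_one).mpr fun _ => by simp

lemma l2_opNorm_one_submatrix_le [DecidableEq l] [DecidableEq m] {e : l → m}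
    (he : Function.Injective e) : ‖(1 : Matrix m m 𝕜).submatrix e id‖ ≤ 1 := by
  set R := (1 : Matrix m m 𝕜).submatrix e id
  have hR : R * Rᴴ = 1 := by
    rw [conjTranspose_submatrix, conjTranspose_one, ← submatrix_mul _ _ _ _ _
      Function.bijective_id, Matrix.one_mul, submatrix_one e he]
  have hsq : ‖R‖ * ‖R‖ ≤ 1 := by
    rw [← l2_opNorm_conjTranspose R, ← l2_opNorm_conjTranspose_mul_self, conjTranspose_conjTranspose,
      hR]
    exact l2_opNorm_one_le
  nlinarith [norm_nonneg R]

lemma l2_opNorm_submatrix_le [DecidableEq l] [DecidableEq m] [DecidableEq n] [DecidableEq o]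
    (M : Matrix m n 𝕜) {e : l → m} {f : o → n} (he : Function.Injective e)
    (hf : Function.Injective f) : ‖M.submatrix e f‖ ≤ ‖M‖ := by
  have hsplit : M.submatrix e f
      = (1 : Matrix m m 𝕜).submatrix e id * M * ((1 : Matrix n n 𝕜).submatrix f id)ᴴ := by
    rw [conjTranspose_submatrix, conjTranspose_one, ← submatrix_id_id M, ← submatrix_mul _ _ _ _ _
      Function.bijective_id, ← submatrix_mul _ _ _ _ _ Function.bijective_id, Matrix.one_mul,
      Matrix.mul_one, submatrix_id_id]
  calc ‖M.submatrix e f‖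
      ≤ ‖(1 : Matrix m m 𝕜).submatrix e id‖ * ‖M‖ * ‖((1 : Matrix n n 𝕜).submatrix f id)ᴴ‖ := by
        rw [hsplit]
        exact (l2_opNorm_mul _ _).trans (mul_le_mul_of_nonneg_right (l2_opNorm_mul _ _)
          (norm_nonneg _))
    _ ≤ 1 * ‖M‖ * 1 := by
        rw [l2_opNorm_conjTranspose]
        gcongr
        · exact l2_opNorm_one_submatrix_le he
        · exact l2_opNorm_one_submatrix_le hf
    _ = ‖M‖ := by ring

end Submatrix

section Blocks

variable {m n : Type*} [Fintype n] [DecidableEq n]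

lemma sum_norm_sq_mulVec_le [Fintype m] (M : Matrix m n 𝕜) (x : n → 𝕜) :
    ∑ i, ‖(M *ᵥ x) i‖ ^ 2 ≤ ‖M‖ ^ 2 * ∑ j, ‖x j‖ ^ 2 := by
  have h := pow_le_pow_left₀ (norm_nonneg _) (M.l2_opNorm_mulVec (WithLp.toLp 2 x)) 2
  rwa [mul_pow, EuclideanSpace.norm_sq_eq, EuclideanSpace.norm_sq_eq] at h

lemma l2_opNorm_le_of_sum_norm_sq_le [Fintype m] (M : Matrix m n 𝕜) {c : ℝ} (hc : 0 ≤ c)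
    (h : ∀ x : n → 𝕜, ∑ i, ‖(M *ᵥ x) i‖ ^ 2 ≤ c ^ 2 * ∑ j, ‖x j‖ ^ 2) : ‖M‖ ≤ c := by
  rw [l2_opNorm_def]
  refine ContinuousLinearMap.opNorm_le_bound _ hc fun x => ?_
  refine (sq_le_sq₀ (norm_nonneg _) (by positivity)).mp ?_
  rw [mul_pow, EuclideanSpace.norm_sq_eq, EuclideanSpace.norm_sq_eq]
  exact h x

lemma sum_norm_sq_mulVec_le_of_forall_notMem {U : Finset m} {T : Finset n} (M : Matrix m n 𝕜)
    (hM : ∀ i ∈ U, ∀ j ∉ T, M i j = 0) (x : n → 𝕜) :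
    ∑ i ∈ U, ‖(M *ᵥ x) i‖ ^ 2 ≤
      ‖M.submatrix ((↑) : U → m) ((↑) : T → n)‖ ^ 2 * ∑ j ∈ T, ‖x j‖ ^ 2 := by
  have hrow : ∀ i : U, (M *ᵥ x) i = (M.submatrix (↑) ((↑) : T → n) *ᵥ fun j => x j) i := by
    intro i
    simp only [mulVec, dotProduct, submatrix_apply]
    rw [Finset.sum_coe_sort T (fun j => M i j * x j), Finset.sum_subset (Finset.subset_univ T)
      fun j _ hj => by rw [hM i i.2 j hj, zero_mul]]
  rw [← Finset.sum_coe_sort U, ← Finset.sum_coe_sort T]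
  simp only [hrow]
  exact sum_norm_sq_mulVec_le _ _

lemma l2_opNorm_le_max_of_block [Fintype m] [DecidableEq m] (M : Matrix m n 𝕜)
    (S : Finset m) (T : Finset n) (hM : ∀ i j, ¬(i ∈ S ↔ j ∈ T) → M i j = 0) :
    ‖M‖ ≤ max ‖M.submatrix ((↑) : S → m) ((↑) : T → n)‖
      ‖M.submatrix ((↑) : ↥Sᶜ → m) ((↑) : ↥Tᶜ → n)‖ := by
  set c := max ‖M.submatrix ((↑) : S → m) ((↑) : T → n)‖
      ‖M.submatrix ((↑) : ↥Sᶜ → m) ((↑) : ↥Tᶜ → n)‖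
  refine M.l2_opNorm_le_of_sum_norm_sq_le (le_max_of_le_left (norm_nonneg _)) fun x => ?_
  calc ∑ i, ‖(M *ᵥ x) i‖ ^ 2 = ∑ i ∈ S, ‖(M *ᵥ x) i‖ ^ 2 + ∑ i ∈ Sᶜ, ‖(M *ᵥ x) i‖ ^ 2 :=
        (Finset.sum_add_sum_compl S _).symm
    _ ≤ c ^ 2 * ∑ j ∈ T, ‖x j‖ ^ 2 + c ^ 2 * ∑ j ∈ Tᶜ, ‖x j‖ ^ 2 := by
        gcongr
        · refine (M.sum_norm_sq_mulVec_le_of_forall_notMem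
            (fun i hi j hj => hM i j (by tauto)) x).trans ?_
          gcongr
          exact le_max_left _ _
        · refine (M.sum_norm_sq_mulVec_le_of_forall_notMem (U := Sᶜ) (T := Tᶜ)
            (fun i hi j hj => hM i j (by simp_all)) x).trans ?_
          gcongr
          exact le_max_right _ _
    _ = c ^ 2 * ∑ j, ‖x j‖ ^ 2 := by rw [← mul_add, Finset.sum_add_sum_compl]

end Blocks

section Pinching

variable {n α : Type*} [DecidableEq n]

def pinch [Zero α] (S : Finset n) (A : Matrix n n α) : Matrix n n α :=
  of fun i j => if (i ∈ S ↔ j ∈ S) then A i j else 0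

variable {S : Finset n}

lemma pinch_apply_of_iff [Zero α] (A : Matrix n n α) {i j : n} (h : i ∈ S ↔ j ∈ S) :
    pinch S A i j = A i j :=
  if_pos h

lemma pinch_apply_of_not_iff [Zero α] (A : Matrix n n α) {i j : n} (h : ¬(i ∈ S ↔ j ∈ S)) :
    pinch S A i j = 0 :=
  if_neg h

lemma isHermitian_pinch [AddMonoid α] [StarAddMonoid α] {A : Matrix n n α} (hA : A.IsHermitian)
    (S : Finset n) : (pinch S A).IsHermitian := by
  ext i j
  by_cases h : i ∈ S ↔ j ∈ S
  · rw [conjTranspose_apply, pinch_apply_of_iff A h, pinch_apply_of_iff A h.symm, hA.apply]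
  · rw [conjTranspose_apply, pinch_apply_of_not_iff A h,
      pinch_apply_of_not_iff A (mt Iff.symm h), star_zero]

lemma pinch_pow_apply_eq_zero [Fintype n] [Semiring α] (A : Matrix n n α) (k : ℕ) {i j : n}
    (h : ¬(i ∈ S ↔ j ∈ S)) : (pinch S A ^ k) i j = 0 := by
  induction k generalizing j with
  | zero => exact one_apply_ne fun hij => h (hij ▸ Iff.rfl)
  | succ k ih =>
    rw [pow_succ, mul_apply]
    refine Finset.sum_eq_zero fun l _ => ?_
    by_cases hl : i ∈ S ↔ l ∈ S
    · rw [pinch_apply_of_not_iff A fun hlj => h (hl.trans hlj), mul_zero]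
    · rw [ih hl, zero_mul]

lemma apply_eq_zero_of_hasSum_pinch_pow [Fintype n] [Semiring α] [TopologicalSpace α]
    [T2Space α] {A X : Matrix n n α} {c : ℕ → α}
    (hX : HasSum (fun k => c k • pinch S A ^ k) X) {i j : n} (h : ¬(i ∈ S ↔ j ∈ S)) :
    X i j = 0 := by
  have hij := Pi.hasSum.mp (Pi.hasSum.mp hX i) j
  simp only [smul_apply, pinch_pow_apply_eq_zero A _ h, smul_zero] at hij
  exact hij.unique hasSum_zero

variable [Fintype n]

lemma l2_opNorm_pinch_le (A : Matrix n n 𝕜) (S : Finset n) : ‖pinch S A‖ ≤ ‖A‖ := by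
  have hS : (pinch S A).submatrix ((↑) : S → n) ((↑) : S → n) = A.submatrix (↑) (↑) := by
    ext i j
    exact pinch_apply_of_iff A (iff_of_true i.2 j.2)
  have hSc : (pinch S A).submatrix ((↑) : ↥Sᶜ → n) ((↑) : ↥Sᶜ → n) = A.submatrix (↑) (↑) := by
    ext i j
    exact pinch_apply_of_iff A (iff_of_false (Finset.mem_compl.mp i.2) (Finset.mem_compl.mp j.2))
  refine ((pinch S A).l2_opNorm_le_max_of_block S S fun i j h => pinch_apply_of_not_iff A h).trans
    ?_
  rw [hS, hSc]
  exact max_le (A.l2_opNorm_submatrix_le Subtype.val_injective Subtype.val_injective)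
    (A.l2_opNorm_submatrix_le Subtype.val_injective Subtype.val_injective)

lemma IsHermitian.l2_opNorm_sub_pinch_le {A : Matrix n n 𝕜} (hA : A.IsHermitian) (S : Finset n) :
    ‖A - pinch S A‖ ≤ ‖A.submatrix ((↑) : S → n) ((↑) : ↥Sᶜ → n)‖ := by
  have hoff : ∀ {i j}, ¬(i ∈ S ↔ j ∈ S) → (A - pinch S A) i j = A i j := fun h => by
    rw [sub_apply, pinch_apply_of_not_iff A h, sub_zero]
  have hS : (A - pinch S A).submatrix ((↑) : S → n) ((↑) : ↥Sᶜ → n) = A.submatrix (↑) (↑) := by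
    ext i j
    exact hoff fun h => Finset.mem_compl.mp j.2 (h.mp i.2)
  have hSc : (A - pinch S A).submatrix ((↑) : ↥Sᶜ → n) ((↑) : ↥Sᶜᶜ → n)
      = (A.submatrix ((↑) : ↥Sᶜᶜ → n) ((↑) : ↥Sᶜ → n))ᴴ := by
    ext i j
    rw [conjTranspose_submatrix, hA.eq]
    exact hoff fun h => Finset.mem_compl.mp i.2 (h.mpr (by simpa using j.2))
  refine ((A - pinch S A).l2_opNorm_le_max_of_block S Sᶜ fun i j h => ?_).trans ?_
  · rw [sub_apply, pinch_apply_of_iff A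
      (not_iff_not.mp (not_iff.mp (by simpa only [Finset.mem_compl] using h))), sub_self]
  · rw [hS, hSc, l2_opNorm_conjTranspose, compl_compl, max_self]

end Pinching

end Matrix

namespace Matrix.IsHermitian

variable {n : Type*} [Fintype n] [DecidableEq n] {A : Matrix n n ℝ}

lemma mrpow_eq_cfc (hA : A.IsHermitian) (t : ℝ) : mrpow A t = cfc (· ^ t : ℝ → ℝ) A := by
  rw [hA.cfc_eq, IsHermitian.cfc, Unitary.conjStarAlgAut_apply, mrpow, dif_pos hA]
  rfl -- `RCLike.ofReal : ℝ → ℝ` is the identity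

lemma cfc_one_sub (hA : A.IsHermitian) (f : ℝ → ℝ) :
    cfc f (1 - A) = cfc (fun x => f (1 - x)) A := by
  have h1 : 1 - A = cfc (fun x : ℝ => 1 - x) A := by
    rw [cfc_sub .., cfc_const_one .., cfc_id' ..]
  rw [h1]
  exact (cfc_comp' f (fun x : ℝ => 1 - x) A ((A.finite_real_spectrum.image _).continuousOn f)
    (A.finite_real_spectrum.continuousOn _) hA).symm

lemma hasSum_cfc (hA : A.IsHermitian) {c : ℕ → ℝ} {f : ℝ → ℝ}
    (h : ∀ i, HasSum (fun k => c k * hA.eigenvalues i ^ k) (f (hA.eigenvalues i))) :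
    HasSum (fun k => c k • A ^ k) (cfc f A) := by
  set U := Unitary.conjStarAlgAut ℝ (Matrix n n ℝ) hA.eigenvectorUnitary
  have hterm : ∀ k, c k • A ^ k = U (diagonal fun i => c k * hA.eigenvalues i ^ k) := by
    intro k
    conv_lhs => rw [hA.spectral_theorem]
    rw [← map_pow, ← map_smul, diagonal_pow, ← diagonal_smul]
    rfl
  have hU : Continuous U := (U : Matrix n n ℝ →ₗ[ℝ] Matrix n n ℝ).continuous_of_finiteDimensional
  simp only [hterm, hA.cfc_eq, IsHermitian.cfc]
  exact (Pi.hasSum.mpr h).matrix_diagonal.map U hU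

lemma l2_opNorm_eq (hA : A.IsHermitian) : ‖A‖ = ‖hA.eigenvalues‖ := by
  conv_lhs => rw [hA.spectral_theorem, Unitary.conjStarAlgAut_apply, mul_assoc,
    CStarRing.norm_mem_unitary_mul _ (SetLike.coe_mem _),
    CStarRing.norm_mul_mem_unitary _ (Unitary.star_mem (SetLike.coe_mem _)), l2_opNorm_diagonal]
  rfl

lemma abs_eigenvalues_le (hA : A.IsHermitian) (i : n) : |hA.eigenvalues i| ≤ ‖A‖ :=
  hA.l2_opNorm_eq ▸ norm_le_pi_norm hA.eigenvalues i

lemma l2_opNorm_le_specRad (hA : A.IsHermitian) : ‖A‖ ≤ specRad A := by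
  rw [hA.l2_opNorm_eq, specRad, dif_pos hA]
  refine (pi_norm_le_iff_of_nonneg (Real.iSup_nonneg fun i => abs_nonneg _)).mpr fun i => ?_
  exact le_ciSup (f := fun i => |hA.eigenvalues i|) (Finite.bddAbove_range _) i

lemma hasSum_mrpow_one_sub (hA : A.IsHermitian) (hA1 : ‖A‖ < 1) (a : ℝ) :
    HasSum (fun k => Ring.multichoose a k • A ^ k) (mrpow (1 - A) (-a)) := by
  rw [(isHermitian_one.sub hA).mrpow_eq_cfc, hA.cfc_one_sub]
  exact hA.hasSum_cfc fun i =>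
    hasSum_multichoose_mul_pow a ((hA.abs_eigenvalues_le i).trans_lt hA1)

end Matrix.IsHermitian

lemma l2_opNorm_mrpow_one_sub_sub_le {n : Type*} [Fintype n] [DecidableEq n]
    {A B : Matrix n n ℝ} (hA : A.IsHermitian) (hB : B.IsHermitian) {r : ℝ} (hAr : ‖A‖ ≤ r)
    (hBr : ‖B‖ ≤ r) (hr : r < 1) {a : ℝ} (ha : 0 < a) :
    ‖mrpow (1 - A) (-a) - mrpow (1 - B) (-a)‖ ≤ a * (1 - r) ^ (-a - 1) * ‖A - B‖ := by
  have hr0 : 0 ≤ r := (norm_nonneg A).trans hAr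
  exact norm_sub_le_of_hasSum_smul_pow (fun k => (Ring.multichoose_pos ha k).le) hAr hBr
    (hA.hasSum_mrpow_one_sub (hAr.trans_lt hr) a) (hB.hasSum_mrpow_one_sub (hBr.trans_lt hr) a)
    (hasSum_succ_mul_multichoose_succ_mul_pow a (by rwa [abs_of_nonneg hr0]))

lemma specNorm_eq_l2_opNorm {𝕜 : Type*} [RCLike 𝕜] {m n : Type*} [Fintype m] [Fintype n]
    [DecidableEq n] (M : Matrix m n 𝕜) : specNorm M = ‖M‖ :=
  rfl

theorem statement4_general {N : ℕ}
    (A : Matrix (Fin N) (Fin N) ℝ) (hA : A.IsHermitian) (hρ : specRad A < 1)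
    (σ α : ℝ) (hα : 0 < α)
    (C : Matrix (Fin N) (Fin N) ℝ) (hC : C = σ ^ 2 • mrpow (1 - A) (-α))
    (S : Finset (Fin N)) :
    specNorm (subMat C S Sᶜ) ≤
      σ ^ 2 * α * (1 - specRad A) ^ (-α - 1) * specNorm (subMat A S Sᶜ) := by
  set D := pinch S A
  set E := mrpow (1 - A) (-α) - mrpow (1 - D) (-α)
  have hAρ : ‖A‖ ≤ specRad A := hA.l2_opNorm_le_specRad
  have hDρ : ‖D‖ ≤ specRad A := (A.l2_opNorm_pinch_le S).trans hAρ
  have hCE : subMat C S Sᶜ = σ ^ 2 • subMat E S Sᶜ := by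
    ext i j
    have hD : mrpow (1 - D) (-α) i.1 j.1 = 0 :=
      apply_eq_zero_of_hasSum_pinch_pow
        ((isHermitian_pinch hA S).hasSum_mrpow_one_sub (hDρ.trans_lt hρ) α)
        fun h => Finset.mem_compl.mp j.2 (h.mp i.2)
    simp [subMat, E, hC, hD]
  have hrpow : 0 ≤ (1 - specRad A) ^ (-α - 1) := Real.rpow_nonneg (by linarith) _
  rw [specNorm_eq_l2_opNorm, specNorm_eq_l2_opNorm, hCE, norm_smul, Real.norm_of_nonneg (sq_nonneg σ)]
  calc σ ^ 2 * ‖subMat E S Sᶜ‖ ≤ σ ^ 2 * ‖E‖ := by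
        gcongr
        exact E.l2_opNorm_submatrix_le Subtype.val_injective Subtype.val_injective
    _ ≤ σ ^ 2 * (α * (1 - specRad A) ^ (-α - 1) * ‖A - D‖) := by
        gcongr
        exact l2_opNorm_mrpow_one_sub_sub_le hA (isHermitian_pinch hA S) hAρ hDρ hρ hα
    _ ≤ σ ^ 2 * (α * (1 - specRad A) ^ (-α - 1) * ‖subMat A S Sᶜ‖) := by
        gcongr
        exact hA.l2_opNorm_sub_pinch_le S
    _ = σ ^ 2 * α * (1 - specRad A) ^ (-α - 1) * ‖subMat A S Sᶜ‖ := by ring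

/-- cross-block bound for the Matérn covariance. -/
theorem statement4 {N : ℕ}
    (A : Matrix (Fin N) (Fin N) ℝ) (hA : A.IsHermitian) (hρ : specRad A < 1)
    (σ α : ℝ) (hσ : 0 < σ) (hα : 0 < α)
    (C : Matrix (Fin N) (Fin N) ℝ) (hC : C = σ ^ 2 • mrpow (1 - A) (-α))
    (S : Finset (Fin N)) (hS : S.Nonempty) (hS' : Sᶜ.Nonempty) :
    specNorm (subMat C S Sᶜ) ≤
      σ ^ 2 * α * (1 - specRad A) ^ (-α - 1) * specNorm (subMat A S Sᶜ) :=
  statement4_general A hA hρ σ α hα C hC S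
end

section
/- Let M be an N×N real matrix and let {1,…,N} = S ⊔ S′ be a partition with both blocks nonempty. Then for every integer k ≥ 1, the cross-block of the k-th power satisfies ‖[M^k]_{SS′}‖ ≤ k ‖M‖^{k−1} ‖M_{SS′}‖. -/
open Matrix

open scoped Matrix.Norms.L2Operator

example {N : ℕ} (M : Matrix (Fin N) (Fin N) ℝ) : specNorm M = ‖M‖ := rfl

lemma specNorm_subMat_le {N : ℕ} (M : Matrix (Fin N) (Fin N) ℝ) (S T : Finset (Fin N)) :
    specNorm (subMat M S T) ≤ specNorm M := by
  show ‖subMat M S T‖ ≤ ‖M‖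
  rw [Matrix.l2_opNorm_def]
  refine ContinuousLinearMap.opNorm_le_bound _ (norm_nonneg _) fun x => ?_
  set y : EuclideanSpace ℝ (Fin N) := WithLp.toLp 2 (fun j => if h : j ∈ T then x ⟨j, h⟩ else 0) with hy
  have hyx : ‖y‖ = ‖x‖ := by
    rw [EuclideanSpace.norm_eq, EuclideanSpace.norm_eq]
    congr 1
    rw [← Finset.sum_subset (Finset.subset_univ T) (by
      intro j _ hj
      simp [hy, hj])]
    rw [← Finset.sum_attach T (fun j => ‖y j‖ ^ 2), Finset.univ_eq_attach]
    refine Finset.sum_congr rfl fun j _ => ?_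
    simp [hy, j.2]
  have happ : ∀ i : {i // i ∈ S},
      (toEuclideanLin (subMat M S T)).toContinuousLinearMap x i = (M *ᵥ y) i.val := by
    intro i
    show (subMat M S T *ᵥ x) i = _
    simp only [Matrix.mulVec, dotProduct, subMat, Matrix.submatrix_apply]
    rw [← Finset.sum_subset (Finset.subset_univ T) (by
      intro j _ hj
      simp [hy, hj])]
    rw [← Finset.sum_attach T (fun j => M i.val j * y j), Finset.univ_eq_attach]
    refine Finset.sum_congr rfl fun j _ => ?_
    simp [hy, j.2]
  calc ‖(toEuclideanLin (subMat M S T)).toContinuousLinearMap x‖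
      ≤ ‖(EuclideanSpace.equiv (Fin N) ℝ).symm (M *ᵥ y)‖ := by
        rw [EuclideanSpace.norm_eq, EuclideanSpace.norm_eq]
        apply Real.sqrt_le_sqrt
        have : ∑ i : {i // i ∈ S}, ‖(toEuclideanLin (subMat M S T)).toContinuousLinearMap x i‖ ^ 2
            = ∑ i ∈ S, ‖(M *ᵥ y) i‖ ^ 2 := by
          rw [← Finset.sum_attach S (fun i => ‖(M *ᵥ y) i‖ ^ 2), Finset.univ_eq_attach]
          exact Finset.sum_congr rfl fun i _ => by rw [happ i]
        rw [this]
        exact Finset.sum_le_sum_of_subset_of_nonneg (Finset.subset_univ S)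
          (fun i _ _ => by positivity)
    _ ≤ ‖M‖ * ‖y‖ := Matrix.l2_opNorm_mulVec M y
    _ = ‖M‖ * ‖x‖ := by rw [hyx]

lemma subMat_mul {N : ℕ} (A B : Matrix (Fin N) (Fin N) ℝ) (S : Finset (Fin N)) :
    subMat (A * B) S Sᶜ =
      subMat A S S * subMat B S Sᶜ + subMat A S Sᶜ * subMat B Sᶜ Sᶜ := by
  ext i j
  simp only [subMat, Matrix.submatrix_apply, Matrix.mul_apply, Matrix.add_apply]
  rw [← Finset.sum_add_sum_compl S (fun l => A i.val l * B l j.val)]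
  congr 1
  · rw [← Finset.sum_attach S (fun l => A i.val l * B l j.val), Finset.univ_eq_attach]
  · rw [← Finset.sum_attach Sᶜ (fun l => A i.val l * B l j.val), Finset.univ_eq_attach]

/-- bound on cross-blocks of matrix powers. -/
theorem statement5 {N : ℕ} (M : Matrix (Fin N) (Fin N) ℝ)
    (S : Finset (Fin N)) (hS : S.Nonempty) (hS' : Sᶜ.Nonempty)
    (k : ℕ) (hk : 1 ≤ k) :
    specNorm (subMat (M ^ k) S Sᶜ) ≤
      (k : ℝ) * specNorm M ^ (k - 1) * specNorm (subMat M S Sᶜ) := by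
  induction k, hk using Nat.le_induction with
  | base => simp
  | succ k hk ih =>
    have hMnn : (0:ℝ) ≤ ‖M‖ := norm_nonneg M
    have hsnn : (0:ℝ) ≤ ‖subMat M S Sᶜ‖ := norm_nonneg _
    have hpow : specNorm (M ^ k) ≤ ‖M‖ ^ k := norm_pow_le' M hk
    have h1 : specNorm (subMat (M ^ k) Sᶜ Sᶜ) ≤ ‖M‖ ^ k :=
      (specNorm_subMat_le (M ^ k) Sᶜ Sᶜ).trans hpow
    have hSS : specNorm (subMat M S S) ≤ ‖M‖ := specNorm_subMat_le M S S
    have key : subMat (M ^ (k+1)) S Sᶜ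
        = subMat M S S * subMat (M ^ k) S Sᶜ + subMat M S Sᶜ * subMat (M ^ k) Sᶜ Sᶜ := by
      rw [pow_succ', subMat_mul]
    show ‖subMat (M ^ (k+1)) S Sᶜ‖ ≤ _
    rw [key]
    have step : ‖subMat M S S * subMat (M ^ k) S Sᶜ + subMat M S Sᶜ * subMat (M ^ k) Sᶜ Sᶜ‖
        ≤ ‖subMat M S S‖ * ‖subMat (M ^ k) S Sᶜ‖ + ‖subMat M S Sᶜ‖ * ‖subMat (M ^ k) Sᶜ Sᶜ‖ :=
      (norm_add_le _ _).trans (add_le_add (Matrix.l2_opNorm_mul _ _) (Matrix.l2_opNorm_mul _ _))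
    refine step.trans ?_
    have t1 : ‖subMat M S S‖ * ‖subMat (M ^ k) S Sᶜ‖
        ≤ ‖M‖ * ((k : ℝ) * ‖M‖ ^ (k - 1) * ‖subMat M S Sᶜ‖) :=
      mul_le_mul hSS ih (norm_nonneg _) hMnn
    have t2 : ‖subMat M S Sᶜ‖ * ‖subMat (M ^ k) Sᶜ Sᶜ‖ ≤ ‖subMat M S Sᶜ‖ * ‖M‖ ^ k :=
      mul_le_mul_of_nonneg_left h1 hsnn
    refine (add_le_add t1 t2).trans (le_of_eq ?_)
    have hk1 : k - 1 + 1 = k := Nat.succ_pred_eq_of_pos hk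
    have : ‖M‖ * ‖M‖ ^ (k - 1) = ‖M‖ ^ k := by
      rw [← pow_succ', hk1]
    push_cast
    show _ = ((k:ℝ) + 1) * ‖M‖ ^ (k + 1 - 1) * ‖subMat M S Sᶜ‖
    rw [Nat.add_sub_cancel, ← this]
    ring
end

section
/- Let Ā be an N×N real symmetric matrix with nonnegative off-diagonal entries, let S ⊆ {1,…,N} with |S| ≥ 2 contain at least one pair i ≠ j with Ā_{ij} > 0, and set a_min := min{ Ā_{ij} : i ≠ j, i,j ∈ S, Ā_{ij} > 0 }. Let c > 0 and suppose the |S|×|S| symmetric matrix M satisfies M = c(I − Ā_S) + Δ for some symmetric matrix Δ with Osc(Δ) < c·a_min/2. Then M is structurally consistent for Ā on S: there exists a threshold τ ∈ ℝ such that M_{ij} < τ for every pair i ≠ j in S with Ā_{ij} > 0 and M_{ij} > τ for every pair i ≠ j in S with Ā_{ij} = 0. -/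
open Matrix

/-- a small-oscillation perturbation of `c (I - Ā_S)` is structurally
consistent for `Ā` on `S`. -/
theorem statement9 {N : ℕ}
    (A : Matrix (Fin N) (Fin N) ℝ) (hA : A.IsHermitian)
    (hA0 : ∀ i j : Fin N, i ≠ j → 0 ≤ A i j)
    (S : Finset (Fin N)) (hScard : 2 ≤ S.card)
    (hpair : ∃ i j : Fin N, i ∈ S ∧ j ∈ S ∧ i ≠ j ∧ 0 < A i j)
    (amin : ℝ)
    (hamin : amin = sInf {x | ∃ i j : Fin N, i ∈ S ∧ j ∈ S ∧ i ≠ j ∧ 0 < A i j ∧ A i j = x})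
    (c : ℝ) (hc : 0 < c)
    (M Δ : Matrix {k // k ∈ S} {k // k ∈ S} ℝ)
    (hM : M.IsHermitian) (hΔ : Δ.IsHermitian)
    (hdecomp : M = c • ((1 : Matrix {k // k ∈ S} {k // k ∈ S} ℝ) - subMat A S S) + Δ)
    (hosc : Osc Δ < c * amin / 2) :
    ∃ τ : ℝ,
      (∀ i j : {k // k ∈ S}, i ≠ j → 0 < A i.1 j.1 → M i j < τ) ∧
      (∀ i j : {k // k ∈ S}, i ≠ j → A i.1 j.1 = 0 → τ < M i j) := by
  obtain ⟨i0, j0, hi0, hj0, hij0, hpos0⟩ := hpair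
  set Se : Set ℝ := {x | ∃ i j : Fin N, i ∈ S ∧ j ∈ S ∧ i ≠ j ∧ 0 < A i j ∧ A i j = x}
    with hSe
  have hSefin : Se.Finite :=
    Set.Finite.subset (Set.finite_range (fun p : Fin N × Fin N => A p.1 p.2))
      (by rintro x ⟨i, j, _, _, _, _, rfl⟩; exact ⟨(i, j), rfl⟩)
  have hSene : Se.Nonempty := ⟨A i0 j0, i0, j0, hi0, hj0, hij0, hpos0, rfl⟩
  have hamem : amin ∈ Se := by rw [hamin]; exact hSene.csInf_mem hSefin
  have haminpos : 0 < amin := by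
    obtain ⟨i, j, _, _, _, hpos, hx⟩ := hamem
    exact hx ▸ hpos
  have hamin_le : ∀ i j : Fin N, i ∈ S → j ∈ S → i ≠ j → 0 < A i j → amin ≤ A i j := by
    intro i j hi hj hne hpos
    rw [hamin]
    exact csInf_le hSefin.bddBelow ⟨i, j, hi, hj, hne, hpos, rfl⟩
  set De : Set ℝ := {x | ∃ i j : {k // k ∈ S}, i ≠ j ∧ Δ i j = x} with hDe
  have hDefin : De.Finite :=
    Set.Finite.subset
      (Set.finite_range (fun p : {k // k ∈ S} × {k // k ∈ S} => Δ p.1 p.2))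
      (by rintro x ⟨i, j, _, rfl⟩; exact ⟨(i, j), rfl⟩)
  obtain ⟨a, haS, b, hbS, hab⟩ := Finset.one_lt_card.mp hScard
  have hDene : De.Nonempty :=
    ⟨Δ ⟨a, haS⟩ ⟨b, hbS⟩, ⟨a, haS⟩, ⟨b, hbS⟩,
      fun h => hab (congrArg Subtype.val h), rfl⟩
  have hosc' : sSup De - sInf De < c * amin / 2 := hosc
  have hle_max : ∀ i j : {k // k ∈ S}, i ≠ j → Δ i j ≤ sSup De := fun i j hne =>
    le_csSup hDefin.bddAbove ⟨i, j, hne, rfl⟩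
  have hmin_le : ∀ i j : {k // k ∈ S}, i ≠ j → sInf De ≤ Δ i j := fun i j hne =>
    csInf_le hDefin.bddBelow ⟨i, j, hne, rfl⟩
  have hMentry : ∀ i j : {k // k ∈ S}, i ≠ j → M i j = Δ i j - c * A i.1 j.1 := by
    intro i j hne
    rw [hdecomp]
    simp [Matrix.add_apply, Matrix.smul_apply, Matrix.sub_apply,
      Matrix.one_apply_ne hne, subMat, Matrix.submatrix_apply]
    ring
  refine ⟨sInf De - c * amin / 2, ?_, ?_⟩
  · intro i j hne hpos
    have h1 : Δ i j ≤ sSup De := hle_max i j hne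
    have h2 : amin ≤ A i.1 j.1 := hamin_le i.1 j.1 i.2 j.2
      (fun h => hne (Subtype.ext h)) hpos
    have h3 := hMentry i j hne
    nlinarith
  · intro i j hne hzero
    have h1 : sInf De ≤ Δ i j := hmin_le i j hne
    have h3 := hMentry i j hne
    rw [hzero] at h3
    nlinarith
end

section
/- Let C be an N×N real symmetric matrix with partition {1,…,N} = S ⊔ S′ (both blocks nonempty), and let z ∈ ℂ be such that B := zI − C_S and D := zI − C_{S′} are invertible (as complex matrices). Set H := C_{SS′} D^{−1} C_{S′S}. If ‖B^{−1}H‖ ≤ Θ for some Θ < 1, then B − H is invertible and the resolvent difference R_S(z) := B^{−1} − (B − H)^{−1} satisfies ‖R_S(z)‖ ≤ ‖C_{SS′}‖² · ‖B^{−1}‖² · ‖D^{−1}‖ / (1 − Θ). -/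
open Matrix

open scoped Matrix.Norms.L2Operator in
lemma aux_neumann {n : Type*} [Fintype n] [DecidableEq n] [Nonempty n]
    (B H : Matrix n n ℂ) (hB : IsUnit B) (Θ : ℝ)
    (hT : ‖Ring.inverse B * H‖ ≤ Θ) (hΘ : Θ < 1) :
    IsUnit (B - H) ∧ ‖Ring.inverse B - Ring.inverse (B - H)‖ ≤
      ‖Ring.inverse B‖ * ‖Ring.inverse B * H‖ / (1 - Θ) := by
  set T : Matrix n n ℂ := Ring.inverse B * H with hTdef
  have h1 : ‖(1 : Matrix n n ℂ)‖ = 1 := by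
    rw [Matrix.cstar_norm_def, _root_.map_one]
    exact ContinuousLinearMap.norm_id
  have hΘ0 : 0 ≤ Θ := le_trans (norm_nonneg _) hT
  have hTn : ‖T‖ < 1 := lt_of_le_of_lt hT hΘ
  have hBH : B - H = B * (1 - T) := by
    rw [mul_sub, mul_one, hTdef, ← mul_assoc, Ring.mul_inverse_cancel _ hB, one_mul]
  set u : (Matrix n n ℂ)ˣ := Units.oneSub T hTn with hu
  have hunit : IsUnit (B - H) := by
    rw [hBH]; exact hB.mul u.isUnit
  refine ⟨hunit, ?_⟩
  -- inverse of B - H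
  have hinvBH : Ring.inverse (B - H) = (↑u⁻¹ : Matrix n n ℂ) * Ring.inverse B := by
    have : B - H = ((hB.unit * u : (Matrix n n ℂ)ˣ) : Matrix n n ℂ) := by
      rw [hBH, Units.val_mul, hB.unit_spec]; rfl
    rw [this, Ring.inverse_unit, _root_.mul_inv_rev, Units.val_mul]
    congr 1
    rw [← Ring.inverse_unit hB.unit, hB.unit_spec]
  -- bound on ‖u⁻¹‖
  have huinv : (↑u⁻¹ : Matrix n n ℂ) = ∑' k : ℕ, T ^ k := rfl
  have hubound : ‖(↑u⁻¹ : Matrix n n ℂ)‖ ≤ (1 - Θ)⁻¹ := by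
    rw [huinv]
    refine tsum_of_norm_bounded (hasSum_geometric_of_lt_one hΘ0 hΘ) fun k => ?_
    cases k with
    | zero => simp [h1]
    | succ m =>
      exact (norm_pow_le' T m.succ_pos).trans
        (pow_le_pow_left₀ (norm_nonneg _) hT _)
  -- key identity
  have hkey : Ring.inverse B - Ring.inverse (B - H) =
      -((↑u⁻¹ : Matrix n n ℂ) * T * Ring.inverse B) := by
    rw [hinvBH]
    have h2 : (↑u⁻¹ : Matrix n n ℂ) * (1 - T) = 1 := by
      rw [← Units.val_oneSub T hTn, ← hu, Units.inv_mul]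
    have h3 : (1 : Matrix n n ℂ) - ↑u⁻¹ = -((↑u⁻¹ : Matrix n n ℂ) * T) := by
      rw [mul_sub, mul_one] at h2
      linear_combination (norm := noncomm_ring) -h2
    calc Ring.inverse B - (↑u⁻¹ : Matrix n n ℂ) * Ring.inverse B
        = ((1 : Matrix n n ℂ) - ↑u⁻¹) * Ring.inverse B := by noncomm_ring
      _ = -((↑u⁻¹ : Matrix n n ℂ) * T * Ring.inverse B) := by rw [h3]; noncomm_ring
  rw [hkey, norm_neg]
  have hstep : ‖(↑u⁻¹ : Matrix n n ℂ) * T * Ring.inverse B‖ ≤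
      (1 - Θ)⁻¹ * ‖T‖ * ‖Ring.inverse B‖ := by
    calc ‖(↑u⁻¹ : Matrix n n ℂ) * T * Ring.inverse B‖
        ≤ ‖(↑u⁻¹ : Matrix n n ℂ) * T‖ * ‖Ring.inverse B‖ := norm_mul_le _ _
      _ ≤ ‖(↑u⁻¹ : Matrix n n ℂ)‖ * ‖T‖ * ‖Ring.inverse B‖ := by
          gcongr; exact norm_mul_le _ _
      _ ≤ (1 - Θ)⁻¹ * ‖T‖ * ‖Ring.inverse B‖ := by
          gcongr
  refine hstep.trans (le_of_eq ?_)
  rw [div_eq_mul_inv]; ring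

open scoped Matrix.Norms.L2Operator

/-- Neumann-series resolvent bound at a complex point `z`. -/
theorem statement15 {N : ℕ}
    (C : Matrix (Fin N) (Fin N) ℝ) (hC : C.IsHermitian)
    (S : Finset (Fin N)) (hS : S.Nonempty) (hS' : Sᶜ.Nonempty)
    (z : ℂ)
    (B : Matrix {k // k ∈ S} {k // k ∈ S} ℂ)
    (hB : B = z • 1 - (subMat C S S).map (fun x : ℝ => (x : ℂ)))
    (D : Matrix {k // k ∈ Sᶜ} {k // k ∈ Sᶜ} ℂ)
    (hD : D = z • 1 - (subMat C Sᶜ Sᶜ).map (fun x : ℝ => (x : ℂ)))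
    (hBinv : IsUnit B) (hDinv : IsUnit D)
    (H : Matrix {k // k ∈ S} {k // k ∈ S} ℂ)
    (hH : H = (subMat C S Sᶜ).map (fun x : ℝ => (x : ℂ)) * D⁻¹ *
      (subMat C Sᶜ S).map (fun x : ℝ => (x : ℂ)))
    (Θ : ℝ) (hΘle : specNorm (B⁻¹ * H) ≤ Θ) (hΘ : Θ < 1) :
    IsUnit (B - H) ∧
      specNorm (B⁻¹ - (B - H)⁻¹) ≤
        specNorm ((subMat C S Sᶜ).map (fun x : ℝ => (x : ℂ))) ^ 2 *
          specNorm B⁻¹ ^ 2 * specNorm D⁻¹ / (1 - Θ) := by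
  haveI : Nonempty {k // k ∈ S} := hS.to_subtype
  have hsn : ∀ {m n : Type} [Fintype m] [Fintype n] [DecidableEq n] (M : Matrix m n ℂ),
      specNorm M = ‖M‖ := fun M => rfl
  set A : Matrix {k // k ∈ S} {k // k ∈ Sᶜ} ℂ := (subMat C S Sᶜ).map (fun x : ℝ => (x : ℂ))
    with hA
  set A' : Matrix {k // k ∈ Sᶜ} {k // k ∈ S} ℂ := (subMat C Sᶜ S).map (fun x : ℝ => (x : ℂ))
    with hA'
  have hAT : A' = Aᴴ := by
    ext i j
    have hsym := congrFun (congrFun hC (j : Fin N)) (i : Fin N)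
    simp only [Matrix.conjTranspose_apply, Matrix.star_apply] at hsym ⊢
    simp only [hA, hA', subMat, Matrix.map_apply, Matrix.submatrix_apply, Complex.star_def,
      Complex.conj_ofReal]
    rw [← hsym]
    rfl
  have hAnorm : ‖A'‖ = ‖A‖ := by rw [hAT]; exact Matrix.l2_opNorm_conjTranspose A
  have hTle : ‖Ring.inverse B * H‖ ≤ Θ := by
    rw [← Matrix.nonsing_inv_eq_ringInverse]; exact hΘle
  obtain ⟨hunit, hbound⟩ := aux_neumann B H hBinv Θ hTle hΘ
  refine ⟨hunit, ?_⟩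
  have hΘ0 : 0 ≤ Θ := le_trans (norm_nonneg _) hTle
  have h1Θ : (0:ℝ) < 1 - Θ := by linarith
  rw [hsn, Matrix.nonsing_inv_eq_ringInverse B, Matrix.nonsing_inv_eq_ringInverse (B - H)]
  refine hbound.trans ?_
  rw [hsn, hsn, hsn, ← Matrix.nonsing_inv_eq_ringInverse]
  have hHnorm : ‖B⁻¹ * H‖ ≤ ‖B⁻¹‖ * (‖A‖ * ‖D⁻¹‖ * ‖A‖) := by
    calc ‖B⁻¹ * H‖ ≤ ‖B⁻¹‖ * ‖H‖ := Matrix.l2_opNorm_mul _ _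
      _ ≤ ‖B⁻¹‖ * (‖A‖ * ‖D⁻¹‖ * ‖A‖) := by
          refine mul_le_mul_of_nonneg_left ?_ (norm_nonneg _)
          rw [hH]
          calc ‖A * D⁻¹ * A'‖ ≤ ‖A * D⁻¹‖ * ‖A'‖ := Matrix.l2_opNorm_mul _ _
            _ ≤ ‖A‖ * ‖D⁻¹‖ * ‖A'‖ := by
                refine mul_le_mul_of_nonneg_right (Matrix.l2_opNorm_mul _ _) (norm_nonneg _)
            _ = ‖A‖ * ‖D⁻¹‖ * ‖A‖ := by rw [hAnorm]
  calc ‖B⁻¹‖ * ‖B⁻¹ * H‖ / (1 - Θ)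
      ≤ ‖B⁻¹‖ * (‖B⁻¹‖ * (‖A‖ * ‖D⁻¹‖ * ‖A‖)) / (1 - Θ) := by gcongr
    _ = ‖A‖ ^ 2 * ‖B⁻¹‖ ^ 2 * ‖D⁻¹‖ / (1 - Θ) := by ring
end
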